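/- Let a and b be terms of Λ× of the same type A, let h : A → A^π be an isomorphism, and suppose a = b is not provable in Λ×. Then: (1) (ha)^ν is of the form Π_{i=1}^n a_i with each a_i a term of Λ; (2) (hb)^ν is of the form Π_{i=1}^m b_i with each b_i a term of Λ; (3) n = m; and (4) one can find i ∈ {1, …, n} such that a_i = b_i is not provable in Λ. -/

import Mathlib

set_option autoImplicit false

/-- Simple types over a set `ν` of atomic types. -/
inductive Ty (ν : Type) : Type
  | atom : ν → Ty ν
  | arrow : Ty ν → Ty ν → Ty ν

/-- A typing context: the (types of the) free variables. -/
abbrev Ctx (ν : Type) : Type := List (Ty ν)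

/-- Typed de Bruijn variables. -/
inductive Var {ν : Type} : Ctx ν → Ty ν → Type
  | vz {Γ : Ctx ν} {A : Ty ν} : Var (A :: Γ) A
  | vs {Γ : Ctx ν} {A B : Ty ν} : Var Γ A → Var (B :: Γ) A

/-- Typed terms of the simply typed lambda calculus Λ. -/
inductive Tm {ν : Type} : Ctx ν → Ty ν → Type
  | var {Γ : Ctx ν} {A : Ty ν} : Var Γ A → Tm Γ A
  | app {Γ : Ctx ν} {A B : Ty ν} : Tm Γ (Ty.arrow A B) → Tm Γ A → Tm Γ B
  | lam {Γ : Ctx ν} {A B : Ty ν} : Tm (A :: Γ) B → Tm Γ (Ty.arrow A B)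

/-- Renamings between contexts. -/
def Ren {ν : Type} (Γ Δ : Ctx ν) : Type := ∀ A : Ty ν, Var Γ A → Var Δ A

def Ren.ext {ν : Type} {Γ Δ : Ctx ν} (ρ : Ren Γ Δ) (A : Ty ν) : Ren (A :: Γ) (A :: Δ) :=
  fun _ v => match v with
  | .vz => .vz
  | .vs w => .vs (ρ _ w)

def Tm.rename {ν : Type} : ∀ {Γ Δ : Ctx ν} {A : Ty ν}, Ren Γ Δ → Tm Γ A → Tm Δ A
  | _, _, _, ρ, .var v => .var (ρ _ v)
  | _, _, _, ρ, .app f a => .app (f.rename ρ) (a.rename ρ)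
  | _, _, _, ρ, .lam b => .lam (b.rename (ρ.ext _))

/-- Simultaneous substitutions. -/
def Subst {ν : Type} (Γ Δ : Ctx ν) : Type := ∀ A : Ty ν, Var Γ A → Tm Δ A

def Subst.ext {ν : Type} {Γ Δ : Ctx ν} (σ : Subst Γ Δ) (A : Ty ν) :
    ∀ B : Ty ν, Var (A :: Γ) B → Tm (A :: Δ) B
  | _, .vz => .var .vz
  | _, .vs w => (σ _ w).rename (fun _ => Var.vs)

def Tm.subst {ν : Type} : ∀ {Γ Δ : Ctx ν} {A : Ty ν}, Subst Γ Δ → Tm Γ A → Tm Δ A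
  | _, _, _, σ, .var v => σ _ v
  | _, _, _, σ, .app f a => .app (f.subst σ) (a.subst σ)
  | _, _, _, σ, .lam b => .lam (b.subst (Subst.ext σ _))

/-- Extending a substitution with a term for the last variable. -/
def Subst.cons {ν : Type} {Γ Δ : Ctx ν} {A : Ty ν} (b : Tm Δ A) (σ : Subst Γ Δ) :
    ∀ B : Ty ν, Var (A :: Γ) B → Tm Δ B
  | _, .vz => b
  | _, .vs w => σ _ w

/-- Substitution of a single term for the last variable: `a[b/x]`. -/
def Tm.subst1 {ν : Type} {Γ : Ctx ν} {A B : Ty ν} (a : Tm (A :: Γ) B) (b : Tm Γ A) : Tm Γ B :=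
  a.subst (Subst.cons b (fun _ v => .var v))

/-- The theory Λ of βη-equality. -/
inductive Eqv {ν : Type} : ∀ {Γ : Ctx ν} {A : Ty ν}, Tm Γ A → Tm Γ A → Prop
  | refl {Γ : Ctx ν} {A : Ty ν} (a : Tm Γ A) : Eqv a a
  | symm {Γ : Ctx ν} {A : Ty ν} {a b : Tm Γ A} : Eqv a b → Eqv b a
  | trans {Γ : Ctx ν} {A : Ty ν} {a b c : Tm Γ A} : Eqv a b → Eqv b c → Eqv a c
  | congApp {Γ : Ctx ν} {A B : Ty ν} {f g : Tm Γ (Ty.arrow A B)} {a b : Tm Γ A} :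
      Eqv f g → Eqv a b → Eqv (.app f a) (.app g b)
  | congLam {Γ : Ctx ν} {A B : Ty ν} {a b : Tm (A :: Γ) B} :
      Eqv a b → Eqv (.lam a) (.lam b)
  | beta {Γ : Ctx ν} {A B : Ty ν} (a : Tm (A :: Γ) B) (b : Tm Γ A) :
      Eqv (.app (.lam a) b) (a.subst1 b)
  | eta {Γ : Ctx ν} {A B : Ty ν} (a : Tm Γ (Ty.arrow A B)) :
      Eqv (.lam (.app (a.rename (fun _ => Var.vs)) (.var .vz))) a

/-- Substitution of types for the atomic types, on types. -/
def Ty.substA {ν : Type} (σ : ν → Ty ν) : Ty ν → Ty ν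
  | .atom v => σ v
  | .arrow A B => .arrow (A.substA σ) (B.substA σ)

def Var.substA {ν : Type} (σ : ν → Ty ν) :
    ∀ {Γ : Ctx ν} {A : Ty ν}, Var Γ A → Var (Γ.map (Ty.substA σ)) (A.substA σ)
  | _, _, .vz => .vz
  | _, _, .vs v => .vs (v.substA σ)

/-- Substitution of types for the atomic types, on terms: type-instances. -/
def Tm.substA {ν : Type} (σ : ν → Ty ν) :
    ∀ {Γ : Ctx ν} {A : Ty ν}, Tm Γ A → Tm (Γ.map (Ty.substA σ)) (A.substA σ)
  | _, _, .var v => .var (v.substA σ)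
  | _, _, .app f a => .app (f.substA σ) (a.substA σ)
  | _, _, .lam b => .lam (b.substA σ)

/-- `Ty.arrs [A₁, …, Aₘ] B = Aₘ → (… → (A₁ → B))` : the type of `λx₁…xₘ.a`. -/
def Ty.arrs {ν : Type} : Ctx ν → Ty ν → Ty ν
  | [], B => B
  | A :: Γ, B => Ty.arrs Γ (Ty.arrow A B)

/-- λ-abstracting all the free variables of a term. -/
def Tm.lamAll {ν : Type} : ∀ {Γ : Ctx ν} {A : Ty ν}, Tm Γ A → Tm [] (Ty.arrs Γ A)
  | [], _, a => a
  | _ :: Γ, _, a => Tm.lamAll (Γ := Γ) (Tm.lam a)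

/-- `Ty.arrsR [B₁, …, Bₙ] C = B₁ → (… → (Bₙ → C))`. -/
def Ty.arrsR {ν : Type} : List (Ty ν) → Ty ν → Ty ν
  | [], C => C
  | B :: Bs, C => Ty.arrow B (Ty.arrsR Bs C)

/-- A list of terms `h₁ : B₁, …, hₙ : Bₙ` in context `Δ`. -/
inductive HList {ν : Type} (Δ : Ctx ν) : List (Ty ν) → Type
  | nil : HList Δ []
  | cons {B : Ty ν} {Bs : List (Ty ν)} : Tm Δ B → HList Δ Bs → HList Δ (B :: Bs)

/-- Iterated application `t h₁ … hₙ`. -/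
def HList.apps {ν : Type} {Δ : Ctx ν} :
    ∀ {Bs : List (Ty ν)} {C : Ty ν}, HList Δ Bs → Tm Δ (Ty.arrsR Bs C) → Tm Δ C
  | _, _, .nil, t => t
  | _, _, .cons h hs, t => HList.apps hs (t.app h)

/-- Iterated application `t h₁ … hₙ`. -/
def Tm.apps {ν : Type} {Δ : Ctx ν} {Bs : List (Ty ν)} {C : Ty ν}
    (t : Tm Δ (Ty.arrsR Bs C)) (hs : HList Δ Bs) : Tm Δ C :=
  hs.apps t

/-- Weakening of a closed term into an arbitrary context. -/
def Var.elim0 {ν : Type} {A : Ty ν} {C : Sort*} : Var ([] : Ctx ν) A → C :=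
  fun v => nomatch v

def Tm.wk {ν : Type} {Δ : Ctx ν} {A : Ty ν} (t : Tm ([] : Ctx ν) A) : Tm Δ A :=
  t.rename (fun _ v => v.elim0)

/-- Types of the typed lambda calculus Λ× : generated from atomic types (`ν`) and the
constant atomic type `T` by `→` and `×`. -/
inductive Tyx (ν : Type) : Type
  | atom : ν → Tyx ν
  | unit : Tyx ν
  | arrow : Tyx ν → Tyx ν → Tyx ν
  | prod : Tyx ν → Tyx ν → Tyx ν

/-- A typing context. -/
abbrev Ctxx (ν : Type) : Type := List (Tyx ν)

/-- Typed de Bruijn variables. -/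
inductive Varx {ν : Type} : Ctxx ν → Tyx ν → Type
  | vz {Γ : Ctxx ν} {A : Tyx ν} : Varx (A :: Γ) A
  | vs {Γ : Ctxx ν} {A B : Tyx ν} : Varx Γ A → Varx (B :: Γ) A

/-- Typed terms of Λ×. -/
inductive Tmx {ν : Type} : Ctxx ν → Tyx ν → Type
  | var {Γ : Ctxx ν} {A : Tyx ν} : Varx Γ A → Tmx Γ A
  | app {Γ : Ctxx ν} {A B : Tyx ν} : Tmx Γ (Tyx.arrow A B) → Tmx Γ A → Tmx Γ B
  | lam {Γ : Ctxx ν} {A B : Tyx ν} : Tmx (A :: Γ) B → Tmx Γ (Tyx.arrow A B)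
  | pair {Γ : Ctxx ν} {A B : Tyx ν} : Tmx Γ A → Tmx Γ B → Tmx Γ (Tyx.prod A B)
  | p1 {Γ : Ctxx ν} {A B : Tyx ν} : Tmx Γ (Tyx.prod A B) → Tmx Γ A
  | p2 {Γ : Ctxx ν} {A B : Tyx ν} : Tmx Γ (Tyx.prod A B) → Tmx Γ B
  | k {Γ : Ctxx ν} : Tmx Γ Tyx.unit

/-- Renamings between contexts. -/
def Renx {ν : Type} (Γ Δ : Ctxx ν) : Type := ∀ A : Tyx ν, Varx Γ A → Varx Δ A

def Renx.ext {ν : Type} {Γ Δ : Ctxx ν} (ρ : Renx Γ Δ) (A : Tyx ν) :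
    ∀ B : Tyx ν, Varx (A :: Γ) B → Varx (A :: Δ) B
  | _, .vz => .vz
  | _, .vs w => .vs (ρ _ w)

def Tmx.rename {ν : Type} : ∀ {Γ Δ : Ctxx ν} {A : Tyx ν}, Renx Γ Δ → Tmx Γ A → Tmx Δ A
  | _, _, _, ρ, .var v => .var (ρ _ v)
  | _, _, _, ρ, .app f a => .app (f.rename ρ) (a.rename ρ)
  | _, _, _, ρ, .lam b => .lam (b.rename (Renx.ext ρ _))
  | _, _, _, ρ, .pair a b => .pair (a.rename ρ) (b.rename ρ)
  | _, _, _, ρ, .p1 a => .p1 (a.rename ρ)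
  | _, _, _, ρ, .p2 a => .p2 (a.rename ρ)
  | _, _, _, _, .k => .k

/-- Simultaneous substitutions. -/
def Substx {ν : Type} (Γ Δ : Ctxx ν) : Type := ∀ A : Tyx ν, Varx Γ A → Tmx Δ A

def Substx.ext {ν : Type} {Γ Δ : Ctxx ν} (σ : Substx Γ Δ) (A : Tyx ν) :
    ∀ B : Tyx ν, Varx (A :: Γ) B → Tmx (A :: Δ) B
  | _, .vz => .var .vz
  | _, .vs w => (σ _ w).rename (fun _ => Varx.vs)

def Tmx.subst {ν : Type} : ∀ {Γ Δ : Ctxx ν} {A : Tyx ν}, Substx Γ Δ → Tmx Γ A → Tmx Δ A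
  | _, _, _, σ, .var v => σ _ v
  | _, _, _, σ, .app f a => .app (f.subst σ) (a.subst σ)
  | _, _, _, σ, .lam b => .lam (b.subst (Substx.ext σ _))
  | _, _, _, σ, .pair a b => .pair (a.subst σ) (b.subst σ)
  | _, _, _, σ, .p1 a => .p1 (a.subst σ)
  | _, _, _, σ, .p2 a => .p2 (a.subst σ)
  | _, _, _, _, .k => .k

def Substx.cons {ν : Type} {Γ Δ : Ctxx ν} {A : Tyx ν} (b : Tmx Δ A) (σ : Substx Γ Δ) :
    ∀ B : Tyx ν, Varx (A :: Γ) B → Tmx Δ B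
  | _, .vz => b
  | _, .vs w => σ _ w

/-- Substitution of a single term for the last variable: `a[b/x]`. -/
def Tmx.subst1 {ν : Type} {Γ : Ctxx ν} {A B : Tyx ν} (a : Tmx (A :: Γ) B) (b : Tmx Γ A) :
    Tmx Γ B :=
  a.subst (Substx.cons b (fun _ v => .var v))

/-- The theory Λ× of βη-equality with surjective pairing and terminal type `T`. -/
inductive Eqvx {ν : Type} : ∀ {Γ : Ctxx ν} {A : Tyx ν}, Tmx Γ A → Tmx Γ A → Prop
  | refl {Γ : Ctxx ν} {A : Tyx ν} (a : Tmx Γ A) : Eqvx a a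
  | symm {Γ : Ctxx ν} {A : Tyx ν} {a b : Tmx Γ A} : Eqvx a b → Eqvx b a
  | trans {Γ : Ctxx ν} {A : Tyx ν} {a b c : Tmx Γ A} : Eqvx a b → Eqvx b c → Eqvx a c
  | congApp {Γ : Ctxx ν} {A B : Tyx ν} {f g : Tmx Γ (Tyx.arrow A B)} {a b : Tmx Γ A} :
      Eqvx f g → Eqvx a b → Eqvx (.app f a) (.app g b)
  | congLam {Γ : Ctxx ν} {A B : Tyx ν} {a b : Tmx (A :: Γ) B} :
      Eqvx a b → Eqvx (.lam a) (.lam b)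
  | congPair {Γ : Ctxx ν} {A B : Tyx ν} {a a' : Tmx Γ A} {b b' : Tmx Γ B} :
      Eqvx a a' → Eqvx b b' → Eqvx (.pair a b) (.pair a' b')
  | congP1 {Γ : Ctxx ν} {A B : Tyx ν} {a b : Tmx Γ (Tyx.prod A B)} :
      Eqvx a b → Eqvx (.p1 a) (.p1 b)
  | congP2 {Γ : Ctxx ν} {A B : Tyx ν} {a b : Tmx Γ (Tyx.prod A B)} :
      Eqvx a b → Eqvx (.p2 a) (.p2 b)
  | beta {Γ : Ctxx ν} {A B : Tyx ν} (a : Tmx (A :: Γ) B) (b : Tmx Γ A) :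
      Eqvx (.app (.lam a) b) (a.subst1 b)
  | eta {Γ : Ctxx ν} {A B : Tyx ν} (a : Tmx Γ (Tyx.arrow A B)) :
      Eqvx (.lam (.app (a.rename (fun _ => Varx.vs)) (.var .vz))) a
  | prodBeta1 {Γ : Ctxx ν} {A B : Tyx ν} (a : Tmx Γ A) (b : Tmx Γ B) :
      Eqvx (.p1 (.pair a b)) a
  | prodBeta2 {Γ : Ctxx ν} {A B : Tyx ν} (a : Tmx Γ A) (b : Tmx Γ B) :
      Eqvx (.p2 (.pair a b)) b
  | prodEta {Γ : Ctxx ν} {A B : Tyx ν} (c : Tmx Γ (Tyx.prod A B)) :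
      Eqvx (.pair (.p1 c) (.p2 c)) c
  | unit {Γ : Ctxx ν} (a : Tmx Γ Tyx.unit) : Eqvx a .k

def Varx.elim0 {ν : Type} {A : Tyx ν} {C : Sort*} : Varx ([] : Ctxx ν) A → C :=
  fun v => nomatch v

/-- Weakening of a closed term into an arbitrary context. -/
def Tmx.wk {ν : Type} {Δ : Ctxx ν} {A : Tyx ν} (t : Tmx ([] : Ctxx ν) A) : Tmx Δ A :=
  t.rename (fun _ v => v.elim0)

/-- One-step reduction of types of Λ× (replacement of a redex subtype by its
contractum). -/
inductive TyStep {ν : Type} : Tyx ν → Tyx ν → Prop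
  | arrProd (A B₁ B₂ : Tyx ν) :
      TyStep (.arrow A (.prod B₁ B₂)) (.prod (.arrow A B₁) (.arrow A B₂))
  | prodArr (A₁ A₂ B : Tyx ν) :
      TyStep (.arrow (.prod A₁ A₂) B) (.arrow A₁ (.arrow A₂ B))
  | prodAssoc (A B C : Tyx ν) :
      TyStep (.prod A (.prod B C)) (.prod (.prod A B) C)
  | arrUnit (A : Tyx ν) : TyStep (.arrow A .unit) .unit
  | unitArr (B : Tyx ν) : TyStep (.arrow .unit B) B
  | prodUnit (A : Tyx ν) : TyStep (.prod A .unit) A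
  | unitProd (A : Tyx ν) : TyStep (.prod .unit A) A
  | arrL {A A' : Tyx ν} (B : Tyx ν) : TyStep A A' → TyStep (.arrow A B) (.arrow A' B)
  | arrR (A : Tyx ν) {B B' : Tyx ν} : TyStep B B' → TyStep (.arrow A B) (.arrow A B')
  | prodL {A A' : Tyx ν} (B : Tyx ν) : TyStep A A' → TyStep (.prod A B) (.prod A' B)
  | prodR (A : Tyx ν) {B B' : Tyx ν} : TyStep B B' → TyStep (.prod A B) (.prod A B')

/-- A type is in product normal form iff none of its subtypes is a redex, i.e. iff no
type reduction applies to it. -/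
def PNF {ν : Type} (A : Tyx ν) : Prop := ∀ B : Tyx ν, ¬ TyStep A B

mutual
/-- Long (expanded βη) normal forms of Λ×: at an arrow type a λ-abstraction, at a
product type a pair, at the terminal type the constant `k`, and at an atomic type a
neutral term. -/
inductive Lnf {ν : Type} : ∀ {Γ : Ctxx ν} {A : Tyx ν}, Tmx Γ A → Prop
  | lam {Γ : Ctxx ν} {A B : Tyx ν} {a : Tmx (A :: Γ) B} : Lnf a → Lnf (.lam a)
  | pair {Γ : Ctxx ν} {A B : Tyx ν} {a : Tmx Γ A} {b : Tmx Γ B} :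
      Lnf a → Lnf b → Lnf (.pair a b)
  | k {Γ : Ctxx ν} : Lnf (.k : Tmx Γ Tyx.unit)
  | neut {Γ : Ctxx ν} {q : ν} {a : Tmx Γ (.atom q)} : Neut a → Lnf a

/-- Neutral terms: a variable applied to long normal forms, possibly through
projections. -/
inductive Neut {ν : Type} : ∀ {Γ : Ctxx ν} {A : Tyx ν}, Tmx Γ A → Prop
  | var {Γ : Ctxx ν} {A : Tyx ν} (v : Varx Γ A) : Neut (.var v)
  | app {Γ : Ctxx ν} {A B : Tyx ν} {f : Tmx Γ (Tyx.arrow A B)} {a : Tmx Γ A} :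
      Neut f → Lnf a → Neut (.app f a)
  | p1 {Γ : Ctxx ν} {A B : Tyx ν} {a : Tmx Γ (Tyx.prod A B)} : Neut a → Neut (.p1 a)
  | p2 {Γ : Ctxx ν} {A B : Tyx ν} {a : Tmx Γ (Tyx.prod A B)} : Neut a → Neut (.p2 a)
end

/-- Embedding of the types of Λ into the types of Λ×. -/
def Ty.emb {ν : Type} : Ty ν → Tyx ν
  | .atom v => .atom v
  | .arrow A B => .arrow A.emb B.emb

/-- Embedding of the variables of Λ into the variables of Λ×. -/
def Var.emb {ν : Type} : ∀ {Γ : Ctx ν} {A : Ty ν}, Var Γ A → Varx (Γ.map Ty.emb) A.emb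
  | _, _, .vz => .vz
  | _, _, .vs v => .vs v.emb

/-- Embedding of the terms of Λ into the terms of Λ× : a term of Λ× "is a term of Λ"
iff it is in the image of this embedding (it then contains no product or `T` types, no
pairing, no projections and no `k`). -/
def Tm.emb {ν : Type} : ∀ {Γ : Ctx ν} {A : Ty ν}, Tm Γ A → Tmx (Γ.map Ty.emb) A.emb
  | _, _, .var v => .var v.emb
  | _, _, .app f a => .app f.emb a.emb
  | _, _, .lam b => .lam b.emb

/-- `IterPairOfLam a` : `a` is of the form `Π_{i=1}^n a_i` (iterated pairing, left
nested, `n ≥ 1`) with each `a_i` a (closed) term of Λ. -/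
inductive IterPairOfLam {ν : Type} : ∀ {A : Tyx ν}, Tmx ([] : Ctxx ν) A → Prop
  | single {A₀ : Ty ν} (a₀ : Tm ([] : Ctx ν) A₀) : IterPairOfLam a₀.emb
  | cons {A : Tyx ν} {a : Tmx ([] : Ctxx ν) A} {B₀ : Ty ν} (b₀ : Tm ([] : Ctx ν) B₀) :
      IterPairOfLam a → IterPairOfLam (.pair a b₀.emb)

/-- `IsK a` : the term `a` is the constant `k`. -/
inductive IsK {ν : Type} : ∀ {Γ : Ctxx ν} {A : Tyx ν}, Tmx Γ A → Prop
  | k {Γ : Ctxx ν} : IsK (.k : Tmx Γ Tyx.unit)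

/-- A closed term `f : A → B` of Λ× is an isomorphism iff there is a term `g : B → A`
such that for `x : A` and `y : B` one can prove `g(f x) = x` and `f(g y) = y` in Λ×. -/
def IsIso {ν : Type} {A B : Tyx ν} (f : Tmx ([] : Ctxx ν) (Tyx.arrow A B)) : Prop :=
  ∃ g : Tmx ([] : Ctxx ν) (Tyx.arrow B A),
    Eqvx (Tmx.app g.wk (Tmx.app f.wk (.var .vz)) : Tmx [A] A) (.var .vz) ∧
    Eqvx (Tmx.app f.wk (Tmx.app g.wk (.var .vz)) : Tmx [B] B) (.var .vz)

/-- `Decomp bad na nb` : `na` and `nb` are iterated pairings `Π_{i=1}^n a_i` and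
`Π_{i=1}^m b_i` of the same shape (so with `n = m`) whose components are (closed) terms
of Λ, and, when `bad = true`, for at least one index `i` the equality `a_i = b_i` is
not provable in Λ. -/
inductive Decomp {ν : Type} : ∀ {A : Tyx ν}, Bool → Tmx ([] : Ctxx ν) A → Tmx ([] : Ctxx ν) A → Prop
  | single {A₀ : Ty ν} (a₀ b₀ : Tm ([] : Ctx ν) A₀) (bad : Bool)
      (h : bad = true → ¬ Eqv a₀ b₀) : Decomp bad a₀.emb b₀.emb
  | cons {A : Tyx ν} {a b : Tmx ([] : Ctxx ν) A} {C₀ : Ty ν} (bl br : Bool)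
      (hd : Decomp bl a b) (c₀ d₀ : Tm ([] : Ctx ν) C₀) (h : br = true → ¬ Eqv c₀ d₀) :
      Decomp (bl || br) (.pair a c₀.emb) (.pair b d₀.emb)

/-! ### Auxiliary lemmas -/

section Aux
variable {ν : Type}

lemma Ty.emb_ne_unit (A : Ty ν) : A.emb ≠ Tyx.unit := by
  cases A <;> simp [Ty.emb]

lemma Ty.emb_ne_prod (A : Ty ν) (B C : Tyx ν) : A.emb ≠ Tyx.prod B C := by
  cases A <;> simp [Ty.emb]

lemma Ty.emb_inj : ∀ {A B : Ty ν}, A.emb = B.emb → A = B := by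
  intro A
  induction A with
  | atom q => intro B h; cases B <;> simp [Ty.emb] at h ⊢; exact h
  | arrow A₁ A₂ ih1 ih2 =>
    intro B h; cases B <;> simp [Ty.emb] at h ⊢
    exact ⟨ih1 h.1, ih2 h.2⟩

/-- Product-normal-form non-unit types: left-nested products of embedded Λ-types. -/
inductive IsEmbProd : Tyx ν → Prop
  | single (B₀ : Ty ν) : IsEmbProd (Ty.emb B₀)
  | cons {B : Tyx ν} (C₀ : Ty ν) : IsEmbProd B → IsEmbProd (Tyx.prod B (Ty.emb C₀))

lemma IsEmbProd.emb_of_not_prod {B : Tyx ν} (h : IsEmbProd B)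
    (hnp : ∀ C D : Tyx ν, B ≠ Tyx.prod C D) : ∃ B₀ : Ty ν, B = Ty.emb B₀ := by
  cases h with
  | single B₀ => exact ⟨B₀, rfl⟩
  | cons C₀ h => exact absurd rfl (hnp _ _)

lemma pnf_struct : ∀ B : Tyx ν, PNF B → B = Tyx.unit ∨ IsEmbProd B := by
  intro B
  induction B with
  | atom q => intro _; exact Or.inr (IsEmbProd.single (Ty.atom q))
  | unit => intro _; exact Or.inl rfl
  | arrow A C ihA ihC =>
    intro h
    have hA : PNF A := fun _ hs => h _ (TyStep.arrL _ hs)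
    have hC : PNF C := fun _ hs => h _ (TyStep.arrR _ hs)
    have hAu : A ≠ Tyx.unit := by rintro rfl; exact h _ (TyStep.unitArr C)
    have hCu : C ≠ Tyx.unit := by rintro rfl; exact h _ (TyStep.arrUnit A)
    have hAp : ∀ C' D, A ≠ Tyx.prod C' D := by
      rintro C' D rfl; exact h _ (TyStep.prodArr C' D C)
    have hCp : ∀ C' D, C ≠ Tyx.prod C' D := by
      rintro C' D rfl; exact h _ (TyStep.arrProd A C' D)
    obtain ⟨A₀, rfl⟩ := ((ihA hA).resolve_left hAu).emb_of_not_prod hAp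
    obtain ⟨C₀, rfl⟩ := ((ihC hC).resolve_left hCu).emb_of_not_prod hCp
    exact Or.inr (IsEmbProd.single (Ty.arrow A₀ C₀))
  | prod A C ihA ihC =>
    intro h
    have hA : PNF A := fun _ hs => h _ (TyStep.prodL _ hs)
    have hC : PNF C := fun _ hs => h _ (TyStep.prodR _ hs)
    have hAu : A ≠ Tyx.unit := by rintro rfl; exact h _ (TyStep.unitProd C)
    have hCu : C ≠ Tyx.unit := by rintro rfl; exact h _ (TyStep.prodUnit A)
    have hCp : ∀ C' D, C ≠ Tyx.prod C' D := by
      rintro C' D rfl; exact h _ (TyStep.prodAssoc A C' D)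
    obtain ⟨C₀, rfl⟩ := ((ihC hC).resolve_left hCu).emb_of_not_prod hCp
    exact Or.inr (IsEmbProd.cons C₀ ((ihA hA).resolve_left hAu))

/-! #### Size of Λ× terms -/

def Tmx.sizex : ∀ {Γ : Ctxx ν} {A : Tyx ν}, Tmx Γ A → Nat
  | _, _, .var _ => 1
  | _, _, .app f a => f.sizex + a.sizex + 1
  | _, _, .lam b => b.sizex + 1
  | _, _, .pair a b => a.sizex + b.sizex + 1
  | _, _, .p1 a => a.sizex + 1
  | _, _, .p2 a => a.sizex + 1
  | _, _, .k => 1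

lemma Tmx.sizex_pos {Γ : Ctxx ν} {A : Tyx ν} (a : Tmx Γ A) : 1 ≤ a.sizex := by
  cases a <;> simp [Tmx.sizex]

/-! #### Long normal forms at embedded types are embedded Λ-terms -/

lemma varx_emb : ∀ (Γ₀ : Ctx ν) {A : Tyx ν} (v : Varx (Γ₀.map Ty.emb) A),
    ∃ (A₀ : Ty ν) (v₀ : Var Γ₀ A₀), A = Ty.emb A₀ ∧ HEq v (Var.emb v₀) := by
  intro Γ₀
  induction Γ₀ with
  | nil => intro A v; exact v.elim0
  | cons B₀ Γ₀ ih =>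
    intro A v
    cases v with
    | vz => exact ⟨B₀, .vz, rfl, HEq.rfl⟩
    | vs w =>
      obtain ⟨A₀, v₀, hA, hv⟩ := ih w
      subst hA
      exact ⟨A₀, .vs v₀, rfl, heq_of_eq (by rw [eq_of_heq hv]; rfl)⟩

lemma emb_main : ∀ n : Nat,
    (∀ {Γ₀ : Ctx ν} {A : Tyx ν} (a : Tmx (Γ₀.map Ty.emb) A), a.sizex ≤ n → Neut a →
      ∃ (A₀ : Ty ν) (a₀ : Tm Γ₀ A₀), A = Ty.emb A₀ ∧ HEq a (Tm.emb a₀)) ∧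
    (∀ {Γ₀ : Ctx ν} {A₀ : Ty ν} (a : Tmx (Γ₀.map Ty.emb) (Ty.emb A₀)), a.sizex ≤ n → Lnf a →
      ∃ a₀ : Tm Γ₀ A₀, a = Tm.emb a₀) := by
  intro n
  induction n with
  | zero =>
    constructor
    · intro _ _ a hs _; exact absurd (a.sizex_pos.trans hs) (by omega)
    · intro _ _ a hs _; exact absurd (a.sizex_pos.trans hs) (by omega)
  | succ n ih =>
    obtain ⟨ihn, ihl⟩ := ih
    have hneut : ∀ {Γ₀ : Ctx ν} {A : Tyx ν} (a : Tmx (Γ₀.map Ty.emb) A),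
        a.sizex ≤ n + 1 → Neut a →
        ∃ (A₀ : Ty ν) (a₀ : Tm Γ₀ A₀), A = Ty.emb A₀ ∧ HEq a (Tm.emb a₀) := by
      intro Γ₀ A a hs hne
      cases hne with
      | var v =>
        obtain ⟨A₀, v₀, hA, hv⟩ := varx_emb Γ₀ v
        subst hA
        exact ⟨A₀, .var v₀, rfl, heq_of_eq (by rw [eq_of_heq hv]; rfl)⟩
      | @app _ A' _ f x hf hx =>
        simp only [Tmx.sizex] at hs
        obtain ⟨F₀, f₀, hF, hf'⟩ := ihn f (by omega) hf
        cases F₀ with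
        | atom q => exact absurd hF (by simp [Ty.emb])
        | arrow A₁ B₁ =>
          simp only [Ty.emb] at hF
          injection hF with h1 h2
          subst h1; subst h2
          obtain ⟨x₀, hx'⟩ := ihl x (by omega) hx
          refine ⟨B₁, .app f₀ x₀, rfl, heq_of_eq ?_⟩
          rw [eq_of_heq hf', hx']; rfl
      | @p1 _ A' B' f hf =>
        simp only [Tmx.sizex] at hs
        obtain ⟨F₀, f₀, hF, _⟩ := ihn f (by omega) hf
        exact absurd hF.symm (Ty.emb_ne_prod _ _ _)
      | @p2 _ A' B' f hf =>
        simp only [Tmx.sizex] at hs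
        obtain ⟨F₀, f₀, hF, _⟩ := ihn f (by omega) hf
        exact absurd hF.symm (Ty.emb_ne_prod _ _ _)
    refine ⟨hneut, ?_⟩
    intro Γ₀ A₀ a hs hl
    cases A₀ with
    | atom q =>
      have hl' : @Lnf ν (Γ₀.map Ty.emb) (Tyx.atom q) a := hl
      cases hl' with
      | neut hne =>
        obtain ⟨A₀', a₀, hA, ha⟩ := hneut a hs hne
        have : A₀' = Ty.atom q := Ty.emb_inj (A := A₀') (B := Ty.atom q) hA.symm
        subst this
        exact ⟨a₀, eq_of_heq ha⟩
    | arrow A₁ B₁ =>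
      have hl' : @Lnf ν (Γ₀.map Ty.emb) (Tyx.arrow A₁.emb B₁.emb) a := hl
      cases hl' with
      | @lam _ _ _ b hb =>
        simp only [Tmx.sizex] at hs
        obtain ⟨b₀, hb'⟩ := ihl (Γ₀ := A₁ :: Γ₀) b (by omega) hb
        exact ⟨.lam b₀, by rw [hb']; rfl⟩

/-! #### `Eqv → Eqvx` along the embedding -/

lemma emb_rename {Γ : Ctx ν} {A : Ty ν} (a : Tm Γ A) :
    ∀ {Δ : Ctx ν} (ρ : Ren Γ Δ) (ρ' : Renx (Γ.map Ty.emb) (Δ.map Ty.emb)),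
    (∀ (B : Ty ν) (v : Var Γ B), ρ' (Ty.emb B) v.emb = (ρ B v).emb) →
    (a.rename ρ).emb = (a.emb).rename ρ' := by
  induction a with
  | var v => intro Δ ρ ρ' hρ; simp only [Tm.rename, Tm.emb, Tmx.rename, hρ]
  | app f x ihf ihx =>
    intro Δ ρ ρ' hρ
    simp only [Tm.rename, Tm.emb, Tmx.rename, ihf _ _ hρ, ihx _ _ hρ]
    rfl
  | lam b ihb =>
    intro Δ ρ ρ' hρ
    simp only [Tm.rename, Tm.emb, Tmx.rename]
    rw [ihb (Ren.ext ρ _) (Renx.ext ρ' _) ?_]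
    intro B v
    cases v with
    | vz => rfl
    | vs w => simp only [Var.emb, Renx.ext, Ren.ext, hρ]

lemma emb_subst {Γ : Ctx ν} {A : Ty ν} (a : Tm Γ A) :
    ∀ {Δ : Ctx ν} (σ : Subst Γ Δ) (σ' : Substx (Γ.map Ty.emb) (Δ.map Ty.emb)),
    (∀ (B : Ty ν) (v : Var Γ B), σ' (Ty.emb B) v.emb = (σ B v).emb) →
    (a.subst σ).emb = (a.emb).subst σ' := by
  induction a with
  | var v => intro Δ σ σ' hσ; simp only [Tm.subst, Tm.emb, Tmx.subst, hσ]
  | app f x ihf ihx =>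
    intro Δ σ σ' hσ
    simp only [Tm.subst, Tm.emb, Tmx.subst, ihf _ _ hσ, ihx _ _ hσ]
    rfl
  | lam b ihb =>
    intro Δ σ σ' hσ
    simp only [Tm.subst, Tm.emb, Tmx.subst]
    rw [ihb (Subst.ext σ _) (Substx.ext σ' _) ?_]
    intro B v
    cases v with
    | vz => rfl
    | vs w =>
      show (σ' _ w.emb).rename (fun _ => Varx.vs) = ((σ _ w).rename (fun _ => Var.vs)).emb
      rw [hσ, emb_rename (σ _ w) (fun _ => Var.vs) (fun _ => Varx.vs) (fun _ _ => by rfl)]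

lemma eqv_emb {Γ : Ctx ν} {A : Ty ν} {a b : Tm Γ A} (h : Eqv a b) :
    Eqvx a.emb b.emb := by
  induction h with
  | refl a => exact Eqvx.refl _
  | symm _ ih => exact ih.symm
  | trans _ _ ih1 ih2 => exact ih1.trans ih2
  | congApp _ _ ih1 ih2 => exact Eqvx.congApp ih1 ih2
  | congLam _ ih => exact Eqvx.congLam ih
  | beta a b =>
    have : (a.subst1 b).emb = (a.emb).subst1 b.emb := by
      unfold Tm.subst1 Tmx.subst1
      exact emb_subst a _ _ (fun B v => by cases v <;> rfl)
    rw [this]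
    exact Eqvx.beta _ _
  | eta a =>
    show Eqvx (Tmx.lam (.app ((a.rename fun _ => Var.vs).emb) (.var .vz))) a.emb
    rw [emb_rename a (Δ := _ :: _) (fun _ => Var.vs) (fun _ => Varx.vs) (fun _ _ => rfl)]
    exact Eqvx.eta a.emb

/-! #### Substitution facts for Λ× -/

lemma tmx_subst_congr {Γ : Ctxx ν} {A : Tyx ν} (t : Tmx Γ A) :
    ∀ {Δ : Ctxx ν} (σ σ' : Substx Γ Δ),
    (∀ (B : Tyx ν) (v : Varx Γ B), σ B v = σ' B v) → t.subst σ = t.subst σ' := by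
  induction t with
  | var v => intro Δ σ σ' h; exact h _ v
  | app f x ihf ihx => intro Δ σ σ' h; simp only [Tmx.subst, ihf _ _ h, ihx _ _ h]
  | lam b ihb =>
    intro Δ σ σ' h
    simp only [Tmx.subst]
    rw [ihb (Substx.ext σ _) (Substx.ext σ' _) ?_]
    intro B v
    cases v with
    | vz => rfl
    | vs w => show (σ _ w).rename _ = (σ' _ w).rename _; rw [h]
  | pair x y ihx ihy => intro Δ σ σ' h; simp only [Tmx.subst, ihx _ _ h, ihy _ _ h]
  | p1 x ihx => intro Δ σ σ' h; simp only [Tmx.subst, ihx _ _ h]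
  | p2 x ihx => intro Δ σ σ' h; simp only [Tmx.subst, ihx _ _ h]
  | k => intro _ _ _ _; rfl

lemma tmx_rename_subst {Γ : Ctxx ν} {A : Tyx ν} (t : Tmx Γ A) :
    ∀ {Δ Θ : Ctxx ν} (ρ : Renx Γ Δ) (σ : Substx Δ Θ),
    (t.rename ρ).subst σ = t.subst (fun B v => σ B (ρ B v)) := by
  induction t with
  | var v => intro Δ Θ ρ σ; rfl
  | app f x ihf ihx => intro Δ Θ ρ σ; simp only [Tmx.rename, Tmx.subst, ihf, ihx]
  | lam b ihb =>
    intro Δ Θ ρ σ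
    simp only [Tmx.rename, Tmx.subst, ihb]
    rw [ihb (Renx.ext ρ _) (Substx.ext σ _)]
    congr 1
    apply tmx_subst_congr
    intro B v
    cases v with
    | vz => rfl
    | vs w => rfl
  | pair x y ihx ihy => intro Δ Θ ρ σ; simp only [Tmx.rename, Tmx.subst, ihx, ihy]
  | p1 x ihx => intro Δ Θ ρ σ; simp only [Tmx.rename, Tmx.subst, ihx]
  | p2 x ihx => intro Δ Θ ρ σ; simp only [Tmx.rename, Tmx.subst, ihx]
  | k => intro _ _ _ _; rfl

lemma tmx_subst_id : ∀ {Γ : Ctxx ν} {A : Tyx ν} (t : Tmx Γ A),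
    t.subst (fun _ v => .var v) = t := by
  intro Γ A t
  induction t with
  | var v => rfl
  | app f x ihf ihx => simp only [Tmx.subst, ihf, ihx]
  | lam b ihb =>
    simp only [Tmx.subst]
    rw [tmx_subst_congr b (Substx.ext (fun _ v => .var v) _) (fun _ v => .var v) ?_, ihb]
    intro B v
    cases v with
    | vz => rfl
    | vs w => rfl
  | pair x y ihx ihy => simp only [Tmx.subst, ihx, ihy]
  | p1 x ihx => simp only [Tmx.subst, ihx]
  | p2 x ihx => simp only [Tmx.subst, ihx]
  | k => rfl

lemma tmx_wk_subst {A B : Tyx ν} (t : Tmx ([] : Ctxx ν) B) (σ : Substx [A] []) :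
    (t.wk : Tmx [A] B).subst σ = t := by
  unfold Tmx.wk
  exact (tmx_rename_subst _ _ _).trans ((tmx_subst_congr _ _ (fun _ v => .var v)
    (fun B v => v.elim0)).trans (tmx_subst_id _))

/-! #### Isomorphisms cancel -/

lemma eqvx_subst1 {Γ : Ctxx ν} {A B : Tyx ν} {s t : Tmx (A :: Γ) B} (h : Eqvx s t)
    (c : Tmx Γ A) : Eqvx (s.subst1 c) (t.subst1 c) :=
  ((Eqvx.beta s c).symm.trans (Eqvx.congApp (Eqvx.congLam h) (Eqvx.refl c))).trans
    (Eqvx.beta t c)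

lemma iso_cancel {A B : Tyx ν} {h : Tmx ([] : Ctxx ν) (Tyx.arrow A B)} (hiso : IsIso h)
    {a b : Tmx ([] : Ctxx ν) A} (he : Eqvx (Tmx.app h a) (Tmx.app h b)) : Eqvx a b := by
  obtain ⟨g, hg1, -⟩ := hiso
  have key : ∀ c : Tmx ([] : Ctxx ν) A, Eqvx (Tmx.app g (Tmx.app h c)) c := by
    intro c
    have := eqvx_subst1 hg1 c
    simp only [Tmx.subst1, Tmx.subst, tmx_wk_subst] at this
    rw [tmx_wk_subst g (Substx.cons c fun _ v => .var v),
      tmx_wk_subst h (Substx.cons c fun _ v => .var v)] at this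
    exact this
  exact ((key a).symm.trans (Eqvx.congApp (Eqvx.refl g) he)).trans (key b)

/-! #### Decomposition of long normal forms at `IsEmbProd` types -/

lemma decomp_exists : ∀ {B : Tyx ν}, IsEmbProd B → ∀ na nb : Tmx ([] : Ctxx ν) B,
    Lnf na → Lnf nb → ∃ bad : Bool, Decomp bad na nb ∧ (bad = false → Eqvx na nb) := by
  intro B hB
  induction hB with
  | single B₀ =>
    intro na nb hna hnb
    obtain ⟨a₀, rfl⟩ := (emb_main (ν := ν) na.sizex).2 (Γ₀ := []) na le_rfl hna
    obtain ⟨b₀, rfl⟩ := (emb_main (ν := ν) nb.sizex).2 (Γ₀ := []) nb le_rfl hnb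
    by_cases hc : Eqv a₀ b₀
    · exact ⟨false, Decomp.single a₀ b₀ false (by simp), fun _ => eqv_emb hc⟩
    · exact ⟨true, Decomp.single a₀ b₀ true (fun _ => hc), by simp⟩
  | cons C₀ hB ih =>
    intro na nb hna hnb
    cases hna with
    | @pair _ _ _ a₁ a₂ ha1 ha2 =>
      cases hnb with
      | @pair _ _ _ b₁ b₂ hb1 hb2 =>
        obtain ⟨c₀, rfl⟩ := (emb_main (ν := ν) a₂.sizex).2 (Γ₀ := []) a₂ le_rfl ha2
        obtain ⟨d₀, rfl⟩ := (emb_main (ν := ν) b₂.sizex).2 (Γ₀ := []) b₂ le_rfl hb2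
        obtain ⟨bl, hd, hf⟩ := ih a₁ b₁ ha1 hb1
        by_cases hc : Eqv c₀ d₀
        · refine ⟨bl || false, Decomp.cons bl false hd c₀ d₀ (by simp), ?_⟩
          intro hb
          simp only [Bool.or_false] at hb
          exact Eqvx.congPair (hf hb) (eqv_emb hc)
        · exact ⟨bl || true, Decomp.cons bl true hd c₀ d₀ (fun _ => hc), by simp⟩

end Aux

/--
**Lemma 8.3.** Let `a` and `b` be (closed) terms of Λ× of the same type `A`, let
`h : A → A^π` be an isomorphism onto the product normal form of `A`, and suppose
`a = b` is not provable in Λ×.  Then (1) `(ha)^ν` is of the form `Π_{i=1}^n a_i` with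
each `a_i` a term of Λ, (2) `(hb)^ν` is of the form `Π_{i=1}^m b_i` with each `b_i` a
term of Λ, (3) `n = m`, and (4) one can find `i ∈ {1, …, n}` such that `a_i = b_i` is
not provable in Λ.  (Here `(ha)^ν` is rendered as any long normal form `na` of `h a`,
and the four clauses are captured by `Decomp true na nb`.)
-/
theorem components_differ {ν : Type} {A B : Tyx ν}
    (hred : Relation.ReflTransGen TyStep A B) (hpnf : PNF B)
    (h : Tmx ([] : Ctxx ν) (Tyx.arrow A B)) (hiso : IsIso h)
    (a b : Tmx ([] : Ctxx ν) A) (hne : ¬ Eqvx a b)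
    (na nb : Tmx ([] : Ctxx ν) B)
    (hna : Lnf na) (hea : Eqvx (.app h a) na)
    (hnb : Lnf nb) (heb : Eqvx (.app h b) nb) :
    Decomp true na nb := by
  have hnab : ¬ Eqvx na nb := fun he =>
    hne (iso_cancel hiso (hea.trans (he.trans heb.symm)))
  rcases pnf_struct B hpnf with rfl | hB
  · cases hna
    cases hnb
    exact absurd (Eqvx.refl _) hnab
  · obtain ⟨bad, hd, hf⟩ := decomp_exists hB na nb hna hnb
    cases bad with
    | true => exact hd
    | false => exact absurd (hf rfl) hnab
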